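/- Let H be a bialgebra over a commutative ring k, A a right H-comodule algebra, B = A^{co H}, and N a B-module that is finitely generated and projective. Then the unit map u_N : N → (N ⊗_B A)^{co H}, u_N(n) = n ⊗ 1, is an isomorphism. Consequently, if N ⊗_B A ≅ A as relative Hopf modules, then N ≅ B as B-modules; i.e., the map j : Pic(B) → Pic^H(A), j([N]) = {N⊗_B A}, is injective. -/

import Mathlib

/-! Projective modules are flat, and `B = A^{co H}` is the equalizer of `ρ` and `a ↦ a ⊗ 1`,
i.e. `0 → B → A → A ⊗ H` (via `ρ - (· ⊗ 1)`) is exact. Tensoring with the flat `N` keeps it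
exact, so `N = N ⊗_B B` is injected into `N ⊗_B A` exactly onto the coinvariants. An `H`-colinear
isomorphism `f : N ⊗_B A ≅ A` matches coinvariants with coinvariants, so `n ↦ f (n ⊗ 1)` is an
isomorphism `N ≅ B`. -/
open TensorProduct

universe u

/-- A commutative right `H`-comodule algebra: a commutative `k`-algebra `A` together with
a coassociative counital coaction `ρ : A → A ⊗ H` which is an algebra map. -/
structure ComodAlg (k H A : Type u) [CommRing k] [Ring H] [Bialgebra k H]
    [CommRing A] [Algebra k A] : Type u where
  ρ : A →ₐ[k] A ⊗[k] H
  counit_comp : ∀ a : A,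
    (TensorProduct.rid k A) ((LinearMap.lTensor A (Coalgebra.counit (R := k) (A := H))) (ρ a)) = a
  coassoc : ∀ a : A,
    (LinearMap.lTensor A (Coalgebra.comul (R := k) (A := H))) (ρ a)
      = (TensorProduct.assoc k A H H) ((LinearMap.rTensor H ρ.toLinearMap) (ρ a))

namespace ComodAlg

variable {k H A : Type u} [CommRing k] [Ring H] [Bialgebra k H]
  [CommRing A] [Algebra k A] (c : ComodAlg k H A)

/-- The subset of coinvariant elements `B = A^{co H}`. -/
def coinvSet : Set A := {a : A | c.ρ a = a ⊗ₜ[k] 1}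

/-- The coinvariants `B = A^{co H}` as a subalgebra of `A`. -/
def coinvAlg : Subalgebra k A where
  carrier := c.coinvSet
  mul_mem' {a} {b} ha hb := by
    simp only [coinvSet, Set.mem_setOf_eq] at *
    rw [map_mul, ha, hb, Algebra.TensorProduct.tmul_mul_tmul, mul_one]
  add_mem' {a} {b} ha hb := by
    simp only [coinvSet, Set.mem_setOf_eq] at *
    rw [map_add, ha, hb, ← add_tmul]
  algebraMap_mem' r := by
    simp only [coinvSet, Set.mem_setOf_eq, AlgHom.commutes,
      Algebra.TensorProduct.algebraMap_apply]

end ComodAlg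

namespace ComodAlg

variable {k H A : Type u} [CommRing k] [Ring H] [Bialgebra k H]
  [CommRing A] [Algebra k A] (c : ComodAlg k H A)

/-- The coaction `ρ : A → A ⊗ H`, viewed as a `B`-linear map for `B = A^{co H}`. -/
noncomputable def rhoB : A →ₗ[↥c.coinvAlg] A ⊗[k] H where
  toFun := c.ρ
  map_add' := map_add _
  map_smul' := fun b a => by
    rcases b with ⟨b, hb⟩
    have hb' : c.ρ b = b ⊗ₜ[k] 1 := hb
    simp only [RingHom.id_apply]
    rw [show (⟨b, hb⟩ : ↥c.coinvAlg) • a = b * a from rfl, map_mul, hb']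
    show _ = b • c.ρ a
    rw [Algebra.smul_def, Algebra.TensorProduct.algebraMap_apply]
    simp

/-- The inclusion `A → A ⊗ H`, `a ↦ a ⊗ 1`, as a `B`-linear map. -/
noncomputable def incB : A →ₗ[↥c.coinvAlg] A ⊗[k] H where
  toFun := fun a => a ⊗ₜ[k] 1
  map_add' := fun a a' => TensorProduct.add_tmul a a' 1
  map_smul' := fun b a => by
    simp only [RingHom.id_apply]
    rw [show b • a = (↑b : A) * a from rfl]
    show _ = (↑b : A) • (a ⊗ₜ[k] (1 : H))
    rw [Algebra.smul_def, Algebra.TensorProduct.algebraMap_apply,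
      Algebra.TensorProduct.tmul_mul_tmul, one_mul]
    simp

/-- The induced coaction on `N ⊗_B A` (expressed with values in `N ⊗_B (A ⊗ H)`). -/
noncomputable def coactInd (N : Type u) [AddCommGroup N] [Module ↥c.coinvAlg N] :
    N ⊗[↥c.coinvAlg] A →ₗ[↥c.coinvAlg] N ⊗[↥c.coinvAlg] (A ⊗[k] H) :=
  LinearMap.lTensor N c.rhoB

end ComodAlg

section Flat

variable {R A C N : Type*} [CommRing R] [Ring A] [Algebra R A] [AddCommGroup C] [Module R C]
  [AddCommGroup N] [Module R N] [Module.Flat R N]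

theorem Module.Flat.injective_tmul_one (h : Function.Injective (algebraMap R A)) :
    Function.Injective fun n : N => n ⊗ₜ[R] (1 : A) := by
  simpa [Function.comp_def] using
    (Module.Flat.lTensor_preserves_injective_linearMap (M := N) (Algebra.linearMap R A) h).comp
      (TensorProduct.rid R N).symm.injective

theorem Module.Flat.lTensor_eq_zero_iff_exists_tmul_one {g : A →ₗ[R] C}
    (h : Function.Exact (Algebra.linearMap R A) g) (x : N ⊗[R] A) :
    LinearMap.lTensor N g x = 0 ↔ ∃ n : N, x = n ⊗ₜ 1 := by
  rw [Module.Flat.lTensor_exact N h x, Set.mem_range, (TensorProduct.rid R N).symm.surjective.exists]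
  simp [eq_comm]

end Flat

namespace ComodAlg

variable {k H A : Type u} [CommRing k] [Ring H] [Bialgebra k H]
  [CommRing A] [Algebra k A] (c : ComodAlg k H A)

theorem exact_algebraMap_rhoB_sub_incB :
    Function.Exact (Algebra.linearMap c.coinvAlg A) (c.rhoB - c.incB) := by
  intro a
  simp only [LinearMap.sub_apply, sub_eq_zero, Set.mem_range, Algebra.linearMap_apply]
  exact ⟨fun h => ⟨⟨a, h⟩, rfl⟩, by rintro ⟨b, rfl⟩; exact b.2⟩

variable (N : Type u) [AddCommGroup N] [Module c.coinvAlg N]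

theorem coactInd_eq_lTensor_incB_iff [Module.Flat c.coinvAlg N] (x : N ⊗[c.coinvAlg] A) :
    c.coactInd N x = LinearMap.lTensor N c.incB x ↔ ∃ n : N, x = n ⊗ₜ 1 := by
  rw [← sub_eq_zero, coactInd, ← LinearMap.sub_apply, ← LinearMap.lTensor_sub]
  exact Module.Flat.lTensor_eq_zero_iff_exists_tmul_one c.exact_algebraMap_rhoB_sub_incB x

variable [Module k N] [IsScalarTower k c.coinvAlg N]

theorem assoc_symm_lTensor_incB (x : N ⊗[c.coinvAlg] A) :
    (AlgebraTensorModule.assoc k c.coinvAlg c.coinvAlg N A H).symm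
      (LinearMap.lTensor N c.incB x) = x ⊗ₜ 1 := by
  induction x using TensorProduct.induction_on with
  -- `A ⊗[k] H` gets two `coinvAlg`-module structures here that agree only up to unfolding,
  -- which stops `map_zero` and `map_add` from rewriting under the equivalence.
  | zero => rw [map_zero, zero_tmul]; exact LinearEquiv.map_zero _
  | tmul n a => rfl
  | add x y hx hy => rw [map_add, add_tmul, ← hx, ← hy]; exact LinearEquiv.map_add _ _ _

variable {N} in
def IsColinear (f : (N ⊗[c.coinvAlg] A) ≃ₗ[c.coinvAlg] A) : Prop :=
  ∀ x : N ⊗[c.coinvAlg] A,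
    c.ρ (f x) = LinearMap.rTensor H ((f : N ⊗[c.coinvAlg] A →ₗ[c.coinvAlg] A).restrictScalars k)
      ((AlgebraTensorModule.assoc k c.coinvAlg c.coinvAlg N A H).symm (c.coactInd N x))

variable {N} in
theorem coactInd_eq_lTensor_incB_iff_mem_of_colinear
    (f : (N ⊗[c.coinvAlg] A) ≃ₗ[c.coinvAlg] A)
    (hf : c.IsColinear f)
    (x : N ⊗[c.coinvAlg] A) :
    c.coactInd N x = LinearMap.lTensor N c.incB x ↔ f x ∈ c.coinvAlg := by
  have hincB : f x ⊗ₜ[k] (1 : H) = LinearMap.rTensor H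
      ((f : N ⊗[c.coinvAlg] A →ₗ[c.coinvAlg] A).restrictScalars k)
        ((AlgebraTensorModule.assoc k c.coinvAlg c.coinvAlg N A H).symm
          (LinearMap.lTensor N c.incB x)) := by
    rw [assoc_symm_lTensor_incB, LinearMap.rTensor_tmul]
    rfl
  change _ ↔ c.ρ (f x) = f x ⊗ₜ[k] (1 : H)
  rw [hf, hincB]
  exact (((f.restrictScalars k).rTensor H).injective.comp
    (AlgebraTensorModule.assoc k c.coinvAlg c.coinvAlg N A H).symm.injective).eq_iff.symm

variable {N} in
theorem nonempty_linearEquiv_of_colinear [Module.Flat c.coinvAlg N]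
    (f : (N ⊗[c.coinvAlg] A) ≃ₗ[c.coinvAlg] A)
    (hf : c.IsColinear f) :
    Nonempty (N ≃ₗ[c.coinvAlg] c.coinvAlg) := by
  have hmem (n : N) : f (n ⊗ₜ 1) ∈ c.coinvAlg :=
    (c.coactInd_eq_lTensor_incB_iff_mem_of_colinear f hf _).1
      ((c.coactInd_eq_lTensor_incB_iff N _).2 ⟨n, rfl⟩)
  let g : N →ₗ[c.coinvAlg] c.coinvAlg :=
    { toFun n := ⟨f (n ⊗ₜ 1), hmem n⟩
      map_add' n n' := Subtype.ext (by simp [add_tmul])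
      map_smul' b n := Subtype.ext (by simp [← smul_tmul', Subalgebra.smul_def]) }
  refine ⟨LinearEquiv.ofBijective g ⟨fun n n' h => ?_, fun b => ?_⟩⟩
  · exact Module.Flat.injective_tmul_one Subtype.val_injective
      (f.injective (congrArg Subtype.val h))
  · obtain ⟨n, hn⟩ := (c.coactInd_eq_lTensor_incB_iff N _).1
      ((c.coactInd_eq_lTensor_incB_iff_mem_of_colinear f hf (f.symm b)).2 (by simp))
    exact ⟨n, Subtype.ext (by simp [g, ← hn])⟩

end ComodAlg

open ComodAlg in
theorem unit_iso_of_fg_projective_general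
    {k H A : Type u} [CommRing k] [Ring H] [Bialgebra k H]
    [CommRing A] [Algebra k A] (c : ComodAlg k H A)
    (N : Type u) [AddCommGroup N] [Module k N] [Module ↥c.coinvAlg N]
    [IsScalarTower k ↥c.coinvAlg N]
    [Module.Projective ↥c.coinvAlg N] :
    (Function.Injective fun n : N => (n ⊗ₜ[↥c.coinvAlg] (1 : A) : N ⊗[↥c.coinvAlg] A)) ∧
    (∀ x : N ⊗[↥c.coinvAlg] A,
      c.coactInd N x = (LinearMap.lTensor N c.incB) x ↔
        ∃ n : N, x = n ⊗ₜ[↥c.coinvAlg] (1 : A)) ∧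
    ((∃ f : (N ⊗[↥c.coinvAlg] A) ≃ₗ[↥c.coinvAlg] A,
        -- `f` is `A`-linear
        (∀ (a : A) (x : N ⊗[↥c.coinvAlg] A),
          f ((LinearMap.lTensor N (LinearMap.mulLeft ↥c.coinvAlg a)) x) = a * f x) ∧
        -- `f` is `H`-colinear
        (∀ x : N ⊗[↥c.coinvAlg] A,
          c.ρ (f x) =
            (LinearMap.rTensor H ((f : N ⊗[↥c.coinvAlg] A →ₗ[↥c.coinvAlg] A).restrictScalars k))
              ((TensorProduct.AlgebraTensorModule.assoc k ↥c.coinvAlg ↥c.coinvAlg N A H).symm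
                (c.coactInd N x)))) →
      Nonempty (N ≃ₗ[↥c.coinvAlg] ↥c.coinvAlg)) :=
  ⟨Module.Flat.injective_tmul_one Subtype.val_injective, c.coactInd_eq_lTensor_incB_iff N,
    fun ⟨f, _, hf⟩ => c.nonempty_linearEquiv_of_colinear f hf⟩

open ComodAlg in
/-- for a finitely generated projective module `N` over `B = A^{co H}`, the
unit map `u_N : N → (N ⊗_B A)^{co H}`, `n ↦ n ⊗ 1`, is an isomorphism: `n ↦ n ⊗ 1` is
injective and its image is exactly the set of coinvariants of `N ⊗_B A`. Consequently, if
`N ⊗_B A ≅ A` as relative Hopf modules (an `A`-linear `H`-colinear isomorphism), then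
`N ≅ B` as `B`-modules; that is, `j : Pic(B) → Pic^H(A)` is injective. -/
theorem unit_iso_of_fg_projective
    {k H A : Type u} [CommRing k] [Ring H] [Bialgebra k H]
    [CommRing A] [Algebra k A] (c : ComodAlg k H A)
    (N : Type u) [AddCommGroup N] [Module k N] [Module ↥c.coinvAlg N]
    [IsScalarTower k ↥c.coinvAlg N]
    [Module.Finite ↥c.coinvAlg N] [Module.Projective ↥c.coinvAlg N] :
    (Function.Injective fun n : N => (n ⊗ₜ[↥c.coinvAlg] (1 : A) : N ⊗[↥c.coinvAlg] A)) ∧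
    (∀ x : N ⊗[↥c.coinvAlg] A,
      c.coactInd N x = (LinearMap.lTensor N c.incB) x ↔
        ∃ n : N, x = n ⊗ₜ[↥c.coinvAlg] (1 : A)) ∧
    ((∃ f : (N ⊗[↥c.coinvAlg] A) ≃ₗ[↥c.coinvAlg] A,
        -- `f` is `A`-linear
        (∀ (a : A) (x : N ⊗[↥c.coinvAlg] A),
          f ((LinearMap.lTensor N (LinearMap.mulLeft ↥c.coinvAlg a)) x) = a * f x) ∧
        -- `f` is `H`-colinear
        (∀ x : N ⊗[↥c.coinvAlg] A,
          c.ρ (f x) =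
            (LinearMap.rTensor H ((f : N ⊗[↥c.coinvAlg] A →ₗ[↥c.coinvAlg] A).restrictScalars k))
              ((TensorProduct.AlgebraTensorModule.assoc k ↥c.coinvAlg ↥c.coinvAlg N A H).symm
                (c.coactInd N x)))) →
      Nonempty (N ≃ₗ[↥c.coinvAlg] ↥c.coinvAlg)) :=
  unit_iso_of_fg_projective_general c N
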